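/- arXiv:2103.13918 — 9 statements merged into one kernel-verified Lean document; each statement's English description precedes it below -/
import Mathlib

section
/- Let X be a finite type and let Equiv.Perm X act on X × Set X by π • (w, S) = (π w, π '' S). Then two pairs (w, S) and (w', S') lie in the same orbit of this action if and only if ((w ∈ S) ↔ (w' ∈ S')) and S.ncard = S'.ncard. -/
/-- The action of prime substitutions on level-1 minterms `(w, S)`:
`π • (w, S) = (π w, π '' S)`. -/
instance permProdSMul {X : Type*} : SMul (Equiv.Perm X) (X × Set X) :=
  ⟨fun π p => (π p.1, π '' p.2)⟩

instance permProdAction {X : Type*} : MulAction (Equiv.Perm X) (X × Set X) where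
  one_smul p := by
    show ((1 : Equiv.Perm X) p.1, ⇑(1 : Equiv.Perm X) '' p.2) = p
    simp
  mul_smul π π' p := by
    show ((π * π') p.1, ⇑(π * π') '' p.2) = (π (π' p.1), ⇑π '' (⇑π' '' p.2))
    simp [Set.image_image]

/-- Glue a bijection `S ≃ S'` and a bijection `Sᶜ ≃ S'ᶜ` into a permutation of `X`
that maps `S` onto `S'` pointwise according to the two bijections. -/
lemma exists_perm_glue {X : Type*} (S S' : Set X) (e : ↥S ≃ ↥S') (f : ↥Sᶜ ≃ ↥S'ᶜ) :
    ∃ π : Equiv.Perm X, (∀ x (h : x ∈ S), π x = e ⟨x, h⟩) ∧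
      (∀ x (h : x ∉ S), π x = f ⟨x, h⟩) ∧ π '' S = S' := by
  classical
  set π : Equiv.Perm X :=
    (Equiv.Set.sumCompl S).symm.trans ((Equiv.sumCongr e f).trans (Equiv.Set.sumCompl S'))
  have h1 : ∀ x (h : x ∈ S), π x = e ⟨x, h⟩ := by
    intro x h
    simp only [π, Equiv.trans_apply]
    rw [Equiv.Set.sumCompl_symm_apply_of_mem h]
    rfl
  have h2 : ∀ x (h : x ∉ S), π x = f ⟨x, h⟩ := by
    intro x h
    simp only [π, Equiv.trans_apply]
    rw [Equiv.Set.sumCompl_symm_apply_of_notMem h]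
    rfl
  refine ⟨π, h1, h2, ?_⟩
  ext y
  constructor
  · rintro ⟨x, hx, rfl⟩
    rw [h1 x hx]; exact (e ⟨x, hx⟩).2
  · intro hy
    refine ⟨π.symm y, ?_, π.apply_symm_apply y⟩
    by_contra hmem
    have := h2 _ hmem
    rw [π.apply_symm_apply] at this
    exact (f ⟨π.symm y, hmem⟩).2 (this ▸ hy)

/-- Two level-1 minterms `(w, S)` and `(w', S')` lie in the same prime orbit
iff `(w ∈ S ↔ w' ∈ S')` and `S`, `S'` have the same number of elements. -/
theorem mem_orbit_iff_mem_iff_and_ncard_eq {X : Type*} [Finite X]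
    (w w' : X) (S S' : Set X) :
    (w', S') ∈ MulAction.orbit (Equiv.Perm X) (w, S) ↔
      ((w ∈ S ↔ w' ∈ S') ∧ S.ncard = S'.ncard) := by
  classical
  constructor
  · rintro ⟨π, hπ⟩
    obtain ⟨h1, h2⟩ := Prod.mk.injEq .. ▸ hπ
    subst h1; subst h2
    refine ⟨⟨fun h => ⟨w, h, rfl⟩,
      fun ⟨x, hx, hxw⟩ => by have hxe : x = w := π.injective hxw; exact hxe ▸ hx⟩, ?_⟩
    exact (Set.ncard_image_of_injective S π.injective).symm
  · rintro ⟨hmem, hcard⟩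
    have hS : Nat.card S = Nat.card S' := by
      rwa [Nat.card_coe_set_eq, Nat.card_coe_set_eq]
    have hSc : Nat.card ↥Sᶜ = Nat.card ↥S'ᶜ := by
      have a1 := S.ncard_add_ncard_compl
      have a2 := S'.ncard_add_ncard_compl
      rw [Nat.card_coe_set_eq, Nat.card_coe_set_eq]
      omega
    obtain ⟨e⟩ := Finite.card_eq.mp hS
    obtain ⟨f⟩ := Finite.card_eq.mp hSc
    by_cases hw : w ∈ S
    · have hw' : w' ∈ S' := hmem.mp hw
      obtain ⟨π, h1, _, h3⟩ :=
        exists_perm_glue S S' (e.trans (Equiv.swap (e ⟨w, hw⟩) ⟨w', hw'⟩)) f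
      refine ⟨π, ?_⟩
      show (π w, π '' S) = (w', S')
      rw [h3, h1 w hw]
      simp
    · have hw' : w' ∉ S' := fun h => hw (hmem.mpr h)
      obtain ⟨π, _, h2, h3⟩ :=
        exists_perm_glue S S' e (f.trans (Equiv.swap (f ⟨w, hw⟩) ⟨w', hw'⟩))
      refine ⟨π, ?_⟩
      show (π w, π '' S) = (w', S')
      rw [h3, h2 w hw]
      simp
end

section
/- Let X be a finite nonempty type with n := Fintype.card X, and let Equiv.Perm X act on X × Set X by π • (w, S) = (π w, π '' S). Then this action has exactly 2n orbits: the quotient of X × Set X by the orbit equivalence relation has cardinality 2 * n. (For X = Fin v → Bool this says the context K[v,1] has exactly 2·2^v prime orbits.) -/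
section Key
variable {X : Type*} [Fintype X]

/-- Combine equivs on a set and its complement into a permutation. -/
noncomputable def combineEquiv (s t : Set X) (e₁ : s ≃ t) (e₂ : (sᶜ : Set X) ≃ (tᶜ : Set X)) :
    Equiv.Perm X := by
  classical
  exact (Equiv.Set.sumCompl s).symm.trans ((e₁.sumCongr e₂).trans (Equiv.Set.sumCompl t))

lemma key_lemma (s t : Set X) (w w' : X) (h : s.ncard = t.ncard) (hmem : w ∈ s ↔ w' ∈ t) :
    ∃ π : Equiv.Perm X, π w = w' ∧ π '' s = t := by
  classical
  have hcards : Fintype.card s = Fintype.card t := by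
    rw [← Nat.card_eq_fintype_card, ← Nat.card_eq_fintype_card,
      Nat.card_coe_set_eq, Nat.card_coe_set_eq, h]
  have hcompl : Fintype.card (sᶜ : Set X) = Fintype.card (tᶜ : Set X) := by
    rw [← Nat.card_eq_fintype_card, ← Nat.card_eq_fintype_card,
      Nat.card_coe_set_eq, Nat.card_coe_set_eq]
    have h1 := s.ncard_add_ncard_compl
    have h2 := t.ncard_add_ncard_compl
    omega
  obtain e₁ := Fintype.equivOfCardEq hcards
  obtain e₂ := Fintype.equivOfCardEq hcompl
  by_cases hw : w ∈ s
  · have hw' : w' ∈ t := hmem.mp hw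
    set e₁' : s ≃ t := e₁.trans (Equiv.swap (e₁ ⟨w, hw⟩) ⟨w', hw'⟩) with he₁'
    refine ⟨combineEquiv s t e₁' e₂, ?_, ?_⟩
    · show combineEquiv s t e₁' e₂ w = w'
      unfold combineEquiv
      simp [Equiv.Set.sumCompl_symm_apply_of_mem hw, he₁', Equiv.swap_apply_left]
    · ext y
      constructor
      · rintro ⟨x, hx, rfl⟩
        unfold combineEquiv
        simp [Equiv.Set.sumCompl_symm_apply_of_mem hx]
      · intro hy
        refine ⟨(combineEquiv s t e₁' e₂).symm y, ?_, by simp⟩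
        unfold combineEquiv
        simp [Equiv.Set.sumCompl_symm_apply_of_mem hy]
  · have hw' : w' ∉ t := fun h' => hw (hmem.mpr h')
    set e₂' : (sᶜ : Set X) ≃ (tᶜ : Set X) :=
      e₂.trans (Equiv.swap (e₂ ⟨w, hw⟩) ⟨w', hw'⟩) with he₂'
    refine ⟨combineEquiv s t e₁ e₂', ?_, ?_⟩
    · show combineEquiv s t e₁ e₂' w = w'
      unfold combineEquiv
      simp [Equiv.Set.sumCompl_symm_apply_of_notMem hw, he₂', Equiv.swap_apply_left]
    · ext y
      constructor
      · rintro ⟨x, hx, rfl⟩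
        unfold combineEquiv
        simp [Equiv.Set.sumCompl_symm_apply_of_mem hx]
      · intro hy
        refine ⟨(combineEquiv s t e₁ e₂').symm y, ?_, by simp⟩
        unfold combineEquiv
        simp [Equiv.Set.sumCompl_symm_apply_of_mem hy]

end Key

section Main
variable {X : Type*} [Fintype X]

lemma orbitRel_iff (p q : X × Set X) :
    (MulAction.orbitRel (Equiv.Perm X) (X × Set X)).r p q ↔
      ((p.1 ∈ p.2 ↔ q.1 ∈ q.2) ∧ p.2.ncard = q.2.ncard) := by
  constructor
  · rintro ⟨π, rfl⟩
    constructor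
    · exact π.injective.mem_set_image
    · exact Set.ncard_image_of_injective _ π.injective
  · rintro ⟨h1, h2⟩
    obtain ⟨π, hπw, hπs⟩ := key_lemma q.2 p.2 q.1 p.1 h2.symm h1.symm
    exact ⟨π, Prod.ext hπw hπs⟩

noncomputable def invariantFun (p : X × Set X) : Fin (Fintype.card X) × Bool := by
  classical
  refine if h : p.1 ∈ p.2 then (⟨p.2.ncard - 1, ?_⟩, true) else (⟨p.2.ncard, ?_⟩, false)
  · have h1 : 0 < p.2.ncard := (Set.ncard_pos p.2.toFinite).mpr ⟨p.1, h⟩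
    have h2 : p.2.ncard ≤ Fintype.card X := by
      have := Set.ncard_le_ncard (Set.subset_univ p.2) Set.finite_univ
      simpa [Set.ncard_univ] using this
    omega
  · have : p.2 ⊂ Set.univ := by
      refine ssubset_of_subset_of_ne (Set.subset_univ _) fun he => h ?_
      simp [he]
    have := Set.ncard_lt_ncard this Set.finite_univ
    simpa [Set.ncard_univ] using this

lemma invariantFun_eq_iff (p q : X × Set X) : invariantFun p = invariantFun q ↔
    ((p.1 ∈ p.2 ↔ q.1 ∈ q.2) ∧ p.2.ncard = q.2.ncard) := by
  classical
  unfold invariantFun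
  by_cases hp : p.1 ∈ p.2 <;> by_cases hq : q.1 ∈ q.2
  · rw [dif_pos hp, dif_pos hq]
    have h1 : 0 < p.2.ncard := (Set.ncard_pos p.2.toFinite).mpr ⟨p.1, hp⟩
    have h2 : 0 < q.2.ncard := (Set.ncard_pos q.2.toFinite).mpr ⟨q.1, hq⟩
    simp only [Prod.mk.injEq, Fin.mk.injEq, and_true]
    constructor
    · intro h; exact ⟨by tauto, by omega⟩
    · rintro ⟨-, h⟩; omega
  · rw [dif_pos hp, dif_neg hq]; simp; tauto
  · rw [dif_neg hp, dif_pos hq]; simp; tauto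
  · rw [dif_neg hp, dif_neg hq]
    simp only [Prod.mk.injEq, Fin.mk.injEq, and_true]
    constructor
    · intro h; exact ⟨by tauto, h⟩
    · rintro ⟨-, h⟩; exact h

end Main

/-- The action of prime substitutions on level-1 minterms has exactly `2 * n`
orbits, where `n` is the cardinality of `X`: the context `K[v,1]` has exactly
`2·2^v` prime orbits. -/
theorem card_orbits_eq_two_mul_card {X : Type*} [Fintype X] [Nonempty X] :
    Nat.card (Quotient (MulAction.orbitRel (Equiv.Perm X) (X × Set X)))
      = 2 * Fintype.card X := by
  classical
  have key : ∀ a b : X × Set X, (MulAction.orbitRel (Equiv.Perm X) (X × Set X)).r a b ↔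
      invariantFun a = invariantFun b := by
    intro a b; rw [orbitRel_iff, invariantFun_eq_iff]
  let F : Quotient (MulAction.orbitRel (Equiv.Perm X) (X × Set X)) →
      Fin (Fintype.card X) × Bool :=
    Quotient.lift invariantFun (fun a b h => (key a b).mp h)
  have hinj : Function.Injective F := by
    intro a b
    induction a using Quotient.ind
    induction b using Quotient.ind
    intro h
    exact Quotient.sound ((key _ _).mpr h)
  have hsurj : Function.Surjective F := by
    rintro ⟨k, b⟩
    cases b
    · -- false: take a set of size k and a point outside it
      obtain ⟨t, -, ht⟩ := Finset.exists_subset_card_eq (s := (Finset.univ : Finset X))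
        (show (k : ℕ) ≤ Finset.univ.card by rw [Finset.card_univ]; exact k.2.le)
      have hne : (tᶜ : Finset X).Nonempty := by
        rw [← Finset.card_pos, Finset.card_compl, ht]
        have := k.2; omega
      obtain ⟨w, hw⟩ := hne
      rw [Finset.mem_compl] at hw
      refine ⟨⟦(w, ↑t)⟧, ?_⟩
      show invariantFun (w, (↑t : Set X)) = _
      unfold invariantFun
      rw [dif_neg (by simpa using hw)]
      simp [Set.ncard_coe_finset, ht]
    · -- true: take a set of size k+1 and a point inside it
      obtain ⟨t, -, ht⟩ := Finset.exists_subset_card_eq (s := (Finset.univ : Finset X))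
        (show (k : ℕ) + 1 ≤ Finset.univ.card by rw [Finset.card_univ]; exact k.2)
      have hne : t.Nonempty := by rw [← Finset.card_pos, ht]; omega
      obtain ⟨w, hw⟩ := hne
      refine ⟨⟦(w, ↑t)⟧, ?_⟩
      show invariantFun (w, (↑t : Set X)) = _
      unfold invariantFun
      rw [dif_pos (by simpa using hw)]
      simp [Set.ncard_coe_finset, ht]
  have hcard : Nat.card (Quotient (MulAction.orbitRel (Equiv.Perm X) (X × Set X)))
      = Nat.card (Fin (Fintype.card X) × Bool) :=
    Nat.card_congr (Equiv.ofBijective F ⟨hinj, hsurj⟩)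
  rw [hcard]
  simp [Nat.card_eq_fintype_card, mul_comm]
end

section
/- Let X be a finite nonempty type with n := Fintype.card X, and let Equiv.Perm X act on X × Set X by π • (w, S) = (π w, π '' S). For b : Bool and k : ℕ with k ≤ n - 1, define O(b,k) := {(w,S) | ((w ∈ S) ↔ b = true) ∧ (S \ {w}).ncard = k}. Then the 2n sets O(b,k) are nonempty, pairwise disjoint, their union is all of X × Set X, and each O(b,k) is exactly one orbit of the action. (O(false,0) is the prime orbit Vv₀, O(true,0) is Dd₀, and for 1 ≤ k ≤ n-1, O(false,k) is Dc_k and O(true,k) is Dw_k.) -/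
/-- The set `O(b,k)` of level-1 minterms `(w,S)` with `(w ∈ S ↔ b)` and
`(S \ {w}).ncard = k`: for `b = false` these are the prime orbits `Vv₀` (k = 0)
and `Dc_k` (k ≥ 1); for `b = true` they are `Dd₀` (k = 0) and `Dw_k` (k ≥ 1). -/
def orbSet {X : Type*} (b : Bool) (k : ℕ) : Set (X × Set X) :=
  {p | (p.1 ∈ p.2 ↔ b = true) ∧ (p.2 \ {p.1}).ncard = k}

/-!
The label `(decide (w ∈ S), (S \ {w}).ncard)` of a minterm `(w, S)` is invariant under
permutations, and it is a complete invariant: a bijection `S \ {w} ≃ S' \ {w'}` of equal-sized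
sets extends to a permutation of `X`, and composing with the swap of the image of `w` and `w'`
(both outside `S' \ {w'}`) gives a permutation carrying `(w, S)` to `(w', S')`. Thus the `O(b, k)`
are exactly the fibres of the label, i.e. the orbits; `k ≤ n - 1` because `S \ {w} ⊆ {w}ᶜ`,
and every such `k` occurs by choosing `k` points off `w`.
-/

open Set

namespace Equiv.Perm

variable {X : Type*}

theorem exists_apply_eq_and_image_eq [Finite X] {w w' : X} {A A' : Set X}
    (hw : w ∉ A) (hw' : w' ∉ A') (hA : A.ncard = A'.ncard) :
    ∃ π : Perm X, π w = w' ∧ π '' A = A' := by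
  classical
  have := Fintype.ofFinite X
  obtain ⟨e⟩ : Nonempty (A ≃ A') := by
    rwa [← Finite.card_eq, Nat.card_coe_set_eq, Nat.card_coe_set_eq]
  set σ : Perm X := e.extendSubtype
  have hσA : σ '' A = A' := by
    refine eq_of_subset_of_ncard_le ?_ (by rw [ncard_image_of_injective _ σ.injective, hA])
    rintro _ ⟨x, hx, rfl⟩
    exact e.extendSubtype_mem x hx
  have hσw : σ w ∉ A' := by rwa [← hσA, σ.injective.mem_set_image]
  refine ⟨swap (σ w) w' * σ, swap_apply_left _ _, ?_⟩
  rw [coe_mul, image_comp, hσA]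
  exact EqOn.image_eq_self fun x hx =>
    swap_apply_of_ne_of_ne (ne_of_mem_of_not_mem hx hσw) (ne_of_mem_of_not_mem hx hw')

end Equiv.Perm

section OrbIndex

variable {X : Type*}

open Classical in
noncomputable def orbIndex (p : X × Set X) : Bool × ℕ :=
  (decide (p.1 ∈ p.2), (p.2 \ {p.1}).ncard)

theorem orbSet_eq_preimage_orbIndex (b : Bool) (k : ℕ) :
    orbSet (X := X) b k = orbIndex ⁻¹' {(b, k)} := by
  ext p
  cases b <;> simp [orbSet, orbIndex]

theorem perm_smul_def (π : Equiv.Perm X) (p : X × Set X) : π • p = (π p.1, π '' p.2) := rfl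

theorem image_sdiff_singleton_of_injective {Y : Type*} {f : X → Y} (hf : f.Injective)
    (S : Set X) (w : X) : f '' (S \ {w}) = f '' S \ {f w} := by
  rw [image_sdiff hf, image_singleton]

theorem eq_of_sdiff_singleton_eq {S T : Set X} {w : X} (h : S \ {w} = T \ {w})
    (hw : w ∈ S ↔ w ∈ T) : S = T := by
  ext x
  by_cases hx : x = w
  · subst hx; exact hw
  · simpa [hx] using congrArg (x ∈ ·) h

theorem orbIndex_smul (π : Equiv.Perm X) (p : X × Set X) : orbIndex (π • p) = orbIndex p := by
  simp only [orbIndex, perm_smul_def, Prod.mk.injEq, decide_eq_decide,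
    π.injective.mem_set_image, ← image_sdiff_singleton_of_injective π.injective,
    ncard_image_of_injective _ π.injective, and_self]

theorem mem_orbit_iff_orbIndex_eq [Finite X] {p q : X × Set X} :
    q ∈ MulAction.orbit (Equiv.Perm X) p ↔ orbIndex q = orbIndex p := by
  refine ⟨fun ⟨π, hπ⟩ => hπ ▸ orbIndex_smul π p, fun h => ?_⟩
  simp only [orbIndex, Prod.ext_iff, decide_eq_decide] at h
  obtain ⟨π, hπw, hπA⟩ := Equiv.Perm.exists_apply_eq_and_image_eq
    (fun h => h.2 rfl) (fun h => h.2 rfl) h.2.symm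
  refine ⟨π, ?_⟩
  change (π p.1, π '' p.2) = q
  refine Prod.ext hπw (eq_of_sdiff_singleton_eq (w := q.1) ?_ ?_)
  · rw [← hπA, ← hπw, image_sdiff_singleton_of_injective π.injective]
  · rw [← hπw, π.injective.mem_set_image, hπw, h.1]

theorem ncard_compl_singleton [Finite X] (w : X) : ({w}ᶜ : Set X).ncard = Nat.card X - 1 := by
  rw [ncard_compl, ncard_singleton]

theorem orbIndex_snd_le [Finite X] (p : X × Set X) : (orbIndex p).2 ≤ Nat.card X - 1 :=
  ncard_compl_singleton p.1 ▸ ncard_le_ncard fun _ hx => hx.2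

theorem exists_orbIndex_eq [Finite X] [Nonempty X] (b : Bool) {k : ℕ}
    (hk : k ≤ Nat.card X - 1) : ∃ p : X × Set X, orbIndex p = (b, k) := by
  obtain ⟨w⟩ := ‹Nonempty X›
  obtain ⟨A, hAw, hAk⟩ :=
    exists_subset_card_eq (s := {w}ᶜ) (n := k) (by rwa [ncard_compl_singleton])
  have hw : w ∉ A := fun h => hAw h rfl
  cases b
  · exact ⟨(w, A), by simp [orbIndex, hw, hAk]⟩
  · exact ⟨(w, insert w A), by simp [orbIndex, insert_sdiff_self_of_notMem hw, hAk]⟩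

end OrbIndex

/-- The `2n` sets `O(b,k)` (`b : Bool`, `k ≤ n - 1`) are nonempty, pairwise
disjoint, cover all of `X × Set X`, and each is exactly one orbit of the action
of prime substitutions on level-1 minterms. -/
theorem orbSet_partition_and_orbits {X : Type*} [Fintype X] [Nonempty X] :
    (∀ (b : Bool) (k : ℕ), k ≤ Fintype.card X - 1 → (orbSet (X := X) b k).Nonempty) ∧
    (∀ (b b' : Bool) (k k' : ℕ), k ≤ Fintype.card X - 1 → k' ≤ Fintype.card X - 1 →
      (b, k) ≠ (b', k') → Disjoint (orbSet (X := X) b k) (orbSet (X := X) b' k')) ∧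
    (⋃ (b : Bool), ⋃ (k : ℕ), ⋃ (_ : k ≤ Fintype.card X - 1), orbSet (X := X) b k)
      = Set.univ ∧
    (∀ (b : Bool) (k : ℕ), k ≤ Fintype.card X - 1 →
      ∀ p ∈ orbSet (X := X) b k, orbSet (X := X) b k = MulAction.orbit (Equiv.Perm X) p) := by
  simp only [orbSet_eq_preimage_orbIndex, ← Nat.card_eq_fintype_card]
  refine ⟨fun b k hk => exists_orbIndex_eq b hk, ?_, ?_, ?_⟩
  · intro b b' k k' _ _ hne
    exact Disjoint.preimage _ (disjoint_singleton.mpr hne)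
  · refine eq_univ_of_forall fun p => mem_iUnion₂.mpr ⟨(orbIndex p).1, (orbIndex p).2, ?_⟩
    exact mem_iUnion.mpr ⟨orbIndex_snd_le p, rfl⟩
  · intro b k _ p hp
    ext q
    rw [mem_orbit_iff_orbIndex_eq, hp]
    rfl
end

section
/- Let X be a finite nonempty type and let A ⊆ X × Set X be nonempty and substitution-closed (T_F p ∈ A for every F : X → X and p ∈ A, where T_F (w,S) = (F w, F '' S)). Then: (DR1) there exists c : X with (c, ∅) ∈ A or (c, {c}) ∈ A; (DR2) if (w, S) ∈ A with w ∈ S, then for every l ≤ (S \ {w}).ncard there exists (w', S') ∈ A with w' ∈ S' and (S' \ {w'}).ncard = l (in particular some (c, {c}) ∈ A); (DR3) if (w, S) ∈ A with w ∉ S and S.ncard ≥ 1, then some (c, {c}) ∈ A, and for every l with 1 ≤ l < S.ncard there exist both a pair (u, U) ∈ A with u ∉ U and U.ncard = l, and a pair (u', U') ∈ A with u' ∈ U' and (U' \ {u'}).ncard = l. -/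
/-- Dependency rules DR1–DR3 for nonempty substitution-closed sets of level-1
minterms (semantic counterparts of characteristic minmatrices of consistent
non-iterative normal modal logics):
DR1: `A` contains a `Vv₀` pair `(c, ∅)` or a `Dd₀` pair `(c, {c})`;
DR2: if `A` contains a `Dw_k`-type pair then it contains `Dw_l`-type pairs for
all `l ≤ k` (including `Dd₀` at `l = 0`);
DR3: if `A` contains a `Dc_k`-type pair (`k ≥ 1`) then it contains a `Dd₀` pair
and, for every `1 ≤ l < k`, both a `Dc_l`-type and a `Dw_l`-type pair. -/
theorem subst_closed_dependency_rules {X : Type*} [Finite X] [Nonempty X]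
    (A : Set (X × Set X)) (hne : A.Nonempty)
    (hA : ∀ (F : X → X) (p : X × Set X), p ∈ A → (F p.1, F '' p.2) ∈ A) :
    (∃ c : X, (c, (∅ : Set X)) ∈ A ∨ (c, ({c} : Set X)) ∈ A) ∧
    (∀ (w : X) (S : Set X), (w, S) ∈ A → w ∈ S →
      ∀ l ≤ (S \ {w}).ncard,
        ∃ (w' : X) (S' : Set X), (w', S') ∈ A ∧ w' ∈ S' ∧ (S' \ {w'}).ncard = l) ∧
    (∀ (w : X) (S : Set X), (w, S) ∈ A → w ∉ S → 1 ≤ S.ncard →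
      (∃ c : X, (c, ({c} : Set X)) ∈ A) ∧
      ∀ l : ℕ, 1 ≤ l → l < S.ncard →
        (∃ (u : X) (U : Set X), (u, U) ∈ A ∧ u ∉ U ∧ U.ncard = l) ∧
        (∃ (u' : X) (U' : Set X), (u', U') ∈ A ∧ u' ∈ U' ∧ (U' \ {u'}).ncard = l)) := by
  classical
  refine ⟨?_, ?_, ?_⟩
  · obtain ⟨⟨w, S⟩, hp⟩ := hne
    have h := hA (fun _ => w) (w, S) hp
    rcases S.eq_empty_or_nonempty with hS | hS
    · exact ⟨w, Or.inl (by simpa [hS] using h)⟩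
    · exact ⟨w, Or.inr (by simpa [hS.image_const] using h)⟩
  · intro w S hp hw l hl
    obtain ⟨T, hTsub, hT⟩ := Set.exists_subset_card_eq hl
    have hwT : w ∉ T := fun h => (hTsub h).2 rfl
    set F : X → X := fun x => if x ∈ T ∪ {w} then x else w with hF
    have h := hA F (w, S) hp
    have hFw : F w = w := by simp [hF]
    have hFval : ∀ y, F y = if y ∈ T ∪ {w} then y else w := fun y => rfl
    have himg : F '' S = T ∪ {w} := by
      ext x
      constructor
      · rintro ⟨y, hy, rfl⟩
        by_cases hyT : y ∈ T ∪ {w}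
        · rw [hFval y, if_pos hyT]; exact hyT
        · rw [hFval y, if_neg hyT]; exact Or.inr rfl
      · rintro (hx | hx)
        · exact ⟨x, (hTsub hx).1, by rw [hFval x, if_pos (Set.mem_union_left _ hx)]⟩
        · rw [Set.mem_singleton_iff] at hx; subst hx; exact ⟨x, hw, hFw⟩
    refine ⟨w, T ∪ {w}, by simpa [hFw, himg] using h, by simp, ?_⟩
    rw [Set.union_diff_right, Set.diff_singleton_eq_self hwT, hT]
  · intro w S hp hw hcard
    have hSne : S.Nonempty := Set.nonempty_of_ncard_ne_zero (by omega)
    obtain ⟨c, hc⟩ := hSne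
    have hSne : S.Nonempty := ⟨c, hc⟩
    constructor
    · have h := hA (fun _ => c) (w, S) hp
      exact ⟨c, by simpa [hSne.image_const] using h⟩
    · intro l hl1 hl2
      constructor
      · obtain ⟨T, hTsub, hT⟩ := Set.exists_subset_card_eq (le_of_lt hl2 : l ≤ S.ncard)
        obtain ⟨t, ht⟩ : T.Nonempty := Set.nonempty_of_ncard_ne_zero (by omega)
        have hwT : w ∉ T := fun h => hw (hTsub h)
        set F : X → X := fun x => if x ∈ T ∪ {w} then x else t with hF
        have h := hA F (w, S) hp
        have hFw : F w = w := by simp [hF]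
        have hFval : ∀ y, F y = if y ∈ T ∪ {w} then y else t := fun y => rfl
        have himg : F '' S = T := by
          ext x
          constructor
          · rintro ⟨y, hy, rfl⟩
            by_cases hyT : y ∈ T ∪ {w}
            · rcases hyT with hyT | hyT
              · rw [hFval y, if_pos (Set.mem_union_left _ hyT)]; exact hyT
              · rw [Set.mem_singleton_iff] at hyT; subst hyT; exact absurd hy hw
            · rw [hFval y, if_neg hyT]; exact ht
          · intro hx
            exact ⟨x, hTsub hx, by rw [hFval x, if_pos (Set.mem_union_left _ hx)]⟩
        exact ⟨w, T, by simpa [hFw, himg] using h, hwT, hT⟩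
      · obtain ⟨T, hTsub, hT⟩ := Set.exists_subset_card_eq (by omega : l + 1 ≤ S.ncard)
        obtain ⟨t, ht⟩ : T.Nonempty := Set.nonempty_of_ncard_ne_zero (by omega)
        have hwT : w ∉ T := fun h => hw (hTsub h)
        set F : X → X := fun x => if x ∈ T then x else t with hF
        have h := hA F (w, S) hp
        have hFw : F w = t := by simp [hF, hwT]
        have hFval : ∀ y, F y = if y ∈ T then y else t := fun y => rfl
        have himg : F '' S = T := by
          ext x
          constructor
          · rintro ⟨y, hy, rfl⟩
            by_cases hyT : y ∈ T
            · rw [hFval y, if_pos hyT]; exact hyT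
            · rw [hFval y, if_neg hyT]; exact ht
          · intro hx
            exact ⟨x, hTsub hx, by rw [hFval x, if_pos hx]⟩
        refine ⟨t, T, by simpa [hFw, himg] using h, ht, ?_⟩
        rw [Set.ncard_diff_singleton_of_mem ht, hT]
        omega
end

section
/- Let X be a finite nonempty type with n := Fintype.card X, and let x, y : ℕ with x ≤ n - 1, y ≤ n and x ≤ y. Then A_K(x,y) and A_D(x,y) are substitution-closed: for every F : X → X and every p in the set, T_F p (where T_F (w,S) = (F w, F '' S)) again lies in the set. -/
/-- The characteristic set of the K-plane system `S_K(x, y-1)`: level-1 minterms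
`(w, S)` with either `w ∉ S` and `|S| ≤ x`, or `w ∈ S` and `|S| ≤ y`. -/
def AK {X : Type*} (x y : ℕ) : Set (X × Set X) :=
  {p | (p.1 ∉ p.2 ∧ p.2.ncard ≤ x) ∨ (p.1 ∈ p.2 ∧ p.2.ncard ≤ y)}

/-- The characteristic set of the D-plane system `S_D(x, y-1)`: level-1 minterms
`(w, S)` with either `w ∉ S` and `1 ≤ |S| ≤ x`, or `w ∈ S` and `|S| ≤ y`. -/
def AD {X : Type*} (x y : ℕ) : Set (X × Set X) :=
  {p | (p.1 ∉ p.2 ∧ 1 ≤ p.2.ncard ∧ p.2.ncard ≤ x) ∨ (p.1 ∈ p.2 ∧ p.2.ncard ≤ y)}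

/-- For all admissible parameters `x ≤ n - 1`, `y ≤ n`, `x ≤ y`, the sets
`A_K(x,y)` and `A_D(x,y)` are substitution-closed: they are immune to all
level-0 uniform substitutions `T_F (w,S) = (F w, F '' S)`. -/
theorem AK_AD_subst_closed {X : Type*} [Fintype X] [Nonempty X] (x y : ℕ)
    (hx : x ≤ Fintype.card X - 1) (hy : y ≤ Fintype.card X) (hxy : x ≤ y) :
    (∀ (F : X → X) (p : X × Set X), p ∈ AK (X := X) x y → (F p.1, F '' p.2) ∈ AK (X := X) x y) ∧
    (∀ (F : X → X) (p : X × Set X), p ∈ AD (X := X) x y → (F p.1, F '' p.2) ∈ AD (X := X) x y) := by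
  have key : ∀ (F : X → X) (S : Set X), (F '' S).ncard ≤ S.ncard :=
    fun F S => Set.ncard_image_le S.toFinite
  constructor
  · rintro F ⟨w, S⟩ (⟨hws, hS⟩ | ⟨hws, hS⟩)
    · by_cases h : F w ∈ F '' S
      · exact Or.inr ⟨h, le_trans (key F S) (le_trans hS hxy)⟩
      · exact Or.inl ⟨h, le_trans (key F S) hS⟩
    · exact Or.inr ⟨⟨w, hws, rfl⟩, le_trans (key F S) hS⟩
  · rintro F ⟨w, S⟩ (⟨hws, h1, hS⟩ | ⟨hws, hS⟩)
    · by_cases h : F w ∈ F '' S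
      · exact Or.inr ⟨h, le_trans (key F S) (le_trans hS hxy)⟩
      · refine Or.inl ⟨h, ?_, le_trans (key F S) hS⟩
        have hne : S.Nonempty := (Set.ncard_pos S.toFinite).mp h1
        exact (Set.ncard_pos ((S.toFinite).image F)).mpr (hne.image F)
    · exact Or.inr ⟨⟨w, hws, rfl⟩, le_trans (key F S) hS⟩
end

section
/- Let X be a finite nonempty type with n := Fintype.card X. Over the parameter range x ≤ n - 1, y ≤ n, x ≤ y, the sets of the classification family are pairwise distinct: A_K(x,y) = A_K(x',y') implies (x,y) = (x',y'); A_D(x,y) = A_D(x',y') implies (x,y) = (x',y'); and A_K(x,y) ≠ A_D(x',y') for all admissible parameters (every A_K contains a pair of the form (w, ∅) while no A_D does). Consequently the family contains exactly n(n+3) distinct sets. -/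
open Finset

theorem two_mul_sum_range_sub (n : ℕ) : 2 * ∑ x ∈ range n, (n + 1 - x) = n * (n + 3) := by
  induction n with
  | zero => rfl
  | succ n ih =>
    rw [sum_range_succ']
    simp only [Nat.add_sub_add_right, Nat.sub_zero]
    rw [mul_add, ih]
    ring

theorem two_mul_card_filter_le (n : ℕ) :
    2 * #{p ∈ range n ×ˢ range (n + 1) | p.1 ≤ p.2} = n * (n + 3) := by
  rw [card_filter, sum_product, ← two_mul_sum_range_sub]
  congr! with x
  rw [← card_filter, range_eq_Ico, Ico_filter_le, Nat.card_Ico, max_eq_right x.zero_le]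

section

variable {X : Type*}

theorem AK_mono {x y x' y' : ℕ} (hx : x' ≤ x) (hy : y' ≤ y) :
    AK (X := X) x' y' ⊆ AK x y := by
  rintro ⟨w, S⟩ (⟨hw, hS⟩ | ⟨hw, hS⟩)
  exacts [Or.inl ⟨hw, hS.trans hx⟩, Or.inr ⟨hw, hS.trans hy⟩]

theorem AD_mono {x y x' y' : ℕ} (hx : x' ≤ x) (hy : y' ≤ y) :
    AD (X := X) x' y' ⊆ AD x y := by
  rintro ⟨w, S⟩ (⟨hw, hS₁, hS⟩ | ⟨hw, hS⟩)
  exacts [Or.inl ⟨hw, hS₁, hS.trans hx⟩, Or.inr ⟨hw, hS.trans hy⟩]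

theorem mk_empty_mem_AK (x y : ℕ) (w : X) : (w, ∅) ∈ AK (X := X) x y :=
  Or.inl ⟨Set.notMem_empty w, by simp⟩

theorem mk_empty_notMem_AD (x y : ℕ) (w : X) : (w, ∅) ∉ AD (X := X) x y := by
  simp [AD]

theorem AK_ne_AD [Nonempty X] (x y x' y' : ℕ) : AK (X := X) x y ≠ AD x' y' := fun h =>
  mk_empty_notMem_AD x' y' (Classical.arbitrary X) (h ▸ mk_empty_mem_AK x y _)

variable [Finite X]

theorem exists_notMem_ncard_eq (w : X) {k : ℕ} (hk : k < Nat.card X) :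
    ∃ S : Set X, w ∉ S ∧ S.ncard = k := by
  obtain ⟨S, hS, rfl⟩ := Set.exists_subset_card_eq (s := {w}ᶜ) (n := k)
    (by rw [Set.ncard_compl, Set.ncard_singleton]; omega)
  exact ⟨S, fun hw => hS hw rfl, rfl⟩

theorem exists_mem_ncard_eq (w : X) {k : ℕ} (hk : k < Nat.card X) :
    ∃ S : Set X, w ∈ S ∧ S.ncard = k + 1 := by
  obtain ⟨S, hw, rfl⟩ := exists_notMem_ncard_eq w hk
  exact ⟨insert w S, S.mem_insert w, Set.ncard_insert_of_notMem hw⟩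

variable [Nonempty X]

theorem AK_subset_AK_iff {x y x' y' : ℕ} (hx' : x' < Nat.card X) (hy' : y' ≤ Nat.card X) :
    AK (X := X) x' y' ⊆ AK x y ↔ x' ≤ x ∧ y' ≤ y := by
  refine ⟨fun h => ⟨?_, ?_⟩, fun h => AK_mono h.1 h.2⟩ <;> by_contra! hlt
  · obtain ⟨S, hw, hS⟩ :=
      exists_notMem_ncard_eq (Classical.arbitrary X) (k := x + 1) (by omega)
    have := @h (_, S) (Or.inl ⟨hw, show S.ncard ≤ x' by omega⟩)
    simp [AK, hw, hS] at this
  · obtain ⟨S, hw, hS⟩ := exists_mem_ncard_eq (Classical.arbitrary X) (k := y) (by omega)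
    have := @h (_, S) (Or.inr ⟨hw, show S.ncard ≤ y' by omega⟩)
    simp [AK, hw, hS] at this

theorem AD_subset_AD_iff {x y x' y' : ℕ} (hx' : x' < Nat.card X) (hy' : y' ≤ Nat.card X) :
    AD (X := X) x' y' ⊆ AD x y ↔ x' ≤ x ∧ y' ≤ y := by
  refine ⟨fun h => ⟨?_, ?_⟩, fun h => AD_mono h.1 h.2⟩ <;> by_contra! hlt
  · obtain ⟨S, hw, hS⟩ :=
      exists_notMem_ncard_eq (Classical.arbitrary X) (k := x + 1) (by omega)
    have := @h (_, S) (Or.inl ⟨hw, show 1 ≤ S.ncard by omega, show S.ncard ≤ x' by omega⟩)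
    simp [AD, hw, hS] at this
  · obtain ⟨S, hw, hS⟩ := exists_mem_ncard_eq (Classical.arbitrary X) (k := y) (by omega)
    have := @h (_, S) (Or.inr ⟨hw, show S.ncard ≤ y' by omega⟩)
    simp [AD, hw, hS] at this

theorem AK_injOn : Set.InjOn (fun p : ℕ × ℕ => AK (X := X) p.1 p.2)
    {p | p.1 < Nat.card X ∧ p.2 ≤ Nat.card X} := by
  rintro ⟨x, y⟩ ⟨hx, hy⟩ ⟨x', y'⟩ ⟨hx', hy'⟩ h
  obtain ⟨hx'x, hy'y⟩ := (AK_subset_AK_iff hx' hy').1 h.ge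
  obtain ⟨hxx', hyy'⟩ := (AK_subset_AK_iff hx hy).1 h.le
  exact Prod.ext (le_antisymm hxx' hx'x) (le_antisymm hyy' hy'y)

theorem AD_injOn : Set.InjOn (fun p : ℕ × ℕ => AD (X := X) p.1 p.2)
    {p | p.1 < Nat.card X ∧ p.2 ≤ Nat.card X} := by
  rintro ⟨x, y⟩ ⟨hx, hy⟩ ⟨x', y'⟩ ⟨hx', hy'⟩ h
  obtain ⟨hx'x, hy'y⟩ := (AD_subset_AD_iff hx' hy').1 h.ge
  obtain ⟨hxx', hyy'⟩ := (AD_subset_AD_iff hx hy).1 h.le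
  exact Prod.ext (le_antisymm hxx' hx'x) (le_antisymm hyy' hy'y)

theorem ncard_setOf_exists_AK_or_AD {P : Finset (ℕ × ℕ)}
    (hP : ∀ p ∈ P, p.1 < Nat.card X ∧ p.2 ≤ Nat.card X) :
    {A : Set (X × Set X) | ∃ p ∈ P, A = AK p.1 p.2 ∨ A = AD p.1 p.2}.ncard = 2 * #P := by
  have hunion : {A : Set (X × Set X) | ∃ p ∈ P, A = AK p.1 p.2 ∨ A = AD p.1 p.2} =
      (fun p : ℕ × ℕ => AK p.1 p.2) '' P ∪ (fun p : ℕ × ℕ => AD p.1 p.2) '' P := by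
    ext A
    simp only [Set.mem_ofPred_eq, Set.mem_union, Set.mem_image, mem_coe, and_or_left, exists_or,
      eq_comm]
  have hdisj : Disjoint ((fun p : ℕ × ℕ => AK (X := X) p.1 p.2) '' P)
      ((fun p : ℕ × ℕ => AD p.1 p.2) '' P) := by
    rw [Set.disjoint_left]
    rintro _ ⟨p, -, rfl⟩ ⟨q, -, h⟩
    exact AK_ne_AD p.1 p.2 q.1 q.2 h.symm
  rw [hunion, Set.ncard_union_eq hdisj, (AK_injOn.mono hP).ncard_image,
    (AD_injOn.mono hP).ncard_image, Set.ncard_coe_finset, two_mul]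

end

/-- Over the admissible parameter range (`x ≤ n - 1`, `y ≤ n`, `x ≤ y`) the
classification family is pairwise distinct: `A_K`'s with different parameters
differ, `A_D`'s with different parameters differ, and no `A_K` equals any `A_D`
(every `A_K` contains a pair `(w, ∅)` while no `A_D` does); consequently the
family consists of exactly `n(n+3)` distinct sets. -/
theorem AK_AD_pairwise_distinct {X : Type*} [Fintype X] [Nonempty X] :
    (∀ x y x' y' : ℕ, x ≤ Fintype.card X - 1 → y ≤ Fintype.card X → x ≤ y →
      x' ≤ Fintype.card X - 1 → y' ≤ Fintype.card X → x' ≤ y' →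
      AK (X := X) x y = AK (X := X) x' y' → (x, y) = (x', y')) ∧
    (∀ x y x' y' : ℕ, x ≤ Fintype.card X - 1 → y ≤ Fintype.card X → x ≤ y →
      x' ≤ Fintype.card X - 1 → y' ≤ Fintype.card X → x' ≤ y' →
      AD (X := X) x y = AD (X := X) x' y' → (x, y) = (x', y')) ∧
    (∀ x y x' y' : ℕ, x ≤ Fintype.card X - 1 → y ≤ Fintype.card X → x ≤ y →
      x' ≤ Fintype.card X - 1 → y' ≤ Fintype.card X → x' ≤ y' →
      AK (X := X) x y ≠ AD (X := X) x' y') ∧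
    (∀ x y : ℕ, ∀ w : X, (w, (∅ : Set X)) ∈ AK (X := X) x y) ∧
    (∀ x y : ℕ, ∀ w : X, (w, (∅ : Set X)) ∉ AD (X := X) x y) ∧
    {A : Set (X × Set X) | ∃ x y : ℕ, x ≤ Fintype.card X - 1 ∧ y ≤ Fintype.card X ∧
        x ≤ y ∧ (A = AK x y ∨ A = AD x y)}.ncard
      = Fintype.card X * (Fintype.card X + 3) := by
  simp only [← Nat.card_eq_fintype_card]
  have hn : 0 < Nat.card X := Nat.card_pos
  refine ⟨fun x y x' y' hx hy _ hx' hy' _ h => AK_injOn ⟨by omega, hy⟩ ⟨by omega, hy'⟩ h,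
    fun x y x' y' hx hy _ hx' hy' _ h => AD_injOn ⟨by omega, hy⟩ ⟨by omega, hy'⟩ h,
    fun x y x' y' _ _ _ _ _ _ => AK_ne_AD x y x' y', mk_empty_mem_AK, mk_empty_notMem_AD, ?_⟩
  have hfamily : {A : Set (X × Set X) | ∃ x y : ℕ, x ≤ Nat.card X - 1 ∧
      y ≤ Nat.card X ∧ x ≤ y ∧ (A = AK x y ∨ A = AD x y)} =
      {A | ∃ p ∈ {p ∈ range (Nat.card X) ×ˢ range (Nat.card X + 1) | p.1 ≤ p.2},
        A = AK p.1 p.2 ∨ A = AD p.1 p.2} := by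
    ext A
    simp only [Set.mem_ofPred_eq, mem_filter, mem_product, mem_range, Prod.exists, and_assoc,
      Nat.lt_succ_iff, Nat.le_sub_one_iff_lt hn]
  rw [hfamily, ncard_setOf_exists_AK_or_AD, two_mul_card_filter_le]
  intro p hp
  simp only [mem_filter, mem_product, mem_range] at hp
  omega
end

section
/- Fix v ≥ 1, let X := Fin v → Bool, n := 2^v, and let t ∈ X be the all-true valuation. Let (W, R) be a Kripke frame and let x : ℕ with x ≤ n - 2. Then the following are equivalent: (i) for every valuation assignment V : W → X and every world w : W with V w = t, either (t ∉ img(V,w) and img(V,w).ncard ≤ x) or t ∈ img(V,w) — i.e., the axiom α_K(x,*) of the system S_K(x,*) is valid on the frame; (ii) every world w satisfies: (¬R w w, and sees(w) is finite with sees(w).ncard ≤ x) or R w w. -/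
/-!
A reflexive world sees its own value `t`. An irreflexive world `w` does not see itself, so
`V w = t` places no constraint on `V` over `sees(w)`; if `sees(w)` has more than `x` elements, map
it onto `x + 1` valuations other than `t` (there are `2^v - 1 ≥ x + 1` of them), which falsifies
the axiom at `w`.
-/

open Set

namespace Set

variable {α β : Type*}

theorem exists_image_eq_of_encard_le {A : Set α} {T : Set β} (hTfin : T.Finite)
    (hTne : T.Nonempty) (h : T.encard ≤ A.encard) : ∃ f : α → β, f '' A = T := by
  classical
  obtain ⟨y₀, hy₀⟩ := hTne
  obtain ⟨S, hSA, hST⟩ := exists_subset_encard_eq h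
  have hSfin : S.Finite := finite_of_encard_eq_coe (hST.trans hTfin.cast_ncard_eq.symm)
  have : Nonempty β := ⟨y₀⟩
  obtain ⟨g, hg⟩ := hSfin.exists_bijOn_of_encard_eq hST
  refine ⟨S.piecewise g fun _ => y₀, (image_subset_iff.2 fun a _ => ?_).antisymm ?_⟩
  · by_cases ha : a ∈ S
    · simpa [ha] using hg.mapsTo ha
    · simpa [ha] using hy₀
  · calc T = g '' S := hg.image_eq.symm
      _ = S.piecewise g (fun _ => y₀) '' S := (piecewise_eqOn (s := S) g _).image_eq.symm
      _ ⊆ _ := image_mono hSA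

theorem add_one_le_encard_compl_singleton {x : ℕ} (hx : (x + 2 : ℕ∞) ≤ ENat.card α) (a : α) :
    (x + 1 : ℕ∞) ≤ ({a}ᶜ : Set α).encard := by
  have h := encard_add_encard_compl {a}
  rw [encard_singleton, encard_univ] at h
  rw [← ENat.add_le_add_iff_left ENat.one_ne_top, h, add_comm]
  simpa [add_assoc, one_add_one_eq_two] using hx

end Set

section KripkeFrame

variable {W X : Type*} {R : W → W → Prop} {t : X} {x : ℕ} {w : W}

theorem alphaK_holds_of_frameCondition
    (h : (¬ R w w ∧ {w' | R w w'}.Finite ∧ {w' | R w w'}.ncard ≤ x) ∨ R w w)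
    (V : W → X) (hVw : V w = t) :
    (t ∉ V '' {w' | R w w'} ∧ (V '' {w' | R w w'}).ncard ≤ x) ∨ t ∈ V '' {w' | R w w'} := by
  rcases h with ⟨-, hfin, hcard⟩ | hR
  · by_cases ht : t ∈ V '' {w' | R w w'}
    · exact Or.inr ht
    · exact Or.inl ⟨ht, (ncard_image_le hfin).trans hcard⟩
  · exact Or.inr ⟨w, hR, hVw⟩

theorem frameCondition_of_alphaK (hx : (x + 1 : ℕ∞) ≤ ({t}ᶜ : Set X).encard)
    (h : ∀ V : W → X, V w = t →
      (t ∉ V '' {w' | R w w'} ∧ (V '' {w' | R w w'}).ncard ≤ x) ∨ t ∈ V '' {w' | R w w'}) :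
    (¬ R w w ∧ {w' | R w w'}.Finite ∧ {w' | R w w'}.ncard ≤ x) ∨ R w w := by
  classical
  by_cases hR : R w w
  · exact Or.inr hR
  refine Or.inl ⟨hR, encard_le_coe_iff_finite_ncard_le.1 (not_lt.1 fun hlt => ?_)⟩
  obtain ⟨T, hTt, hTcard⟩ := exists_subset_encard_eq hx
  have hTfin : T.Finite := finite_of_encard_eq_coe hTcard
  have hTne : T.Nonempty := nonempty_of_encard_ne_zero (by simp [hTcard])
  obtain ⟨f, hf⟩ := exists_image_eq_of_encard_le hTfin hTne
    (hTcard ▸ (ENat.add_one_le_iff (ENat.natCast_ne_top x)).2 hlt)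
  have himg : Function.update f w t '' {w' | R w w'} = T := by
    rw [← hf]
    exact EqOn.image_eq fun u hu => Function.update_of_ne (by rintro rfl; exact hR hu) _ _
  have hTncard : T.ncard = x + 1 := by exact_mod_cast hTfin.cast_ncard_eq.trans hTcard
  rcases h (Function.update f w t) (Function.update_self _ _ _) with ⟨-, hle⟩ | hmem
  · rw [himg] at hle
    omega
  · rw [himg] at hmem
    exact hTt hmem rfl

theorem alphaK_valid_iff_frameCondition (hx : (x + 1 : ℕ∞) ≤ ({t}ᶜ : Set X).encard) :
    (∀ (V : W → X) (w : W), V w = t →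
      (t ∉ V '' {w' | R w w'} ∧ (V '' {w' | R w w'}).ncard ≤ x) ∨ t ∈ V '' {w' | R w w'}) ↔
    ∀ w : W, (¬ R w w ∧ {w' | R w w'}.Finite ∧ {w' | R w w'}.ncard ≤ x) ∨ R w w :=
  ⟨fun h _ => frameCondition_of_alphaK hx fun V => h V _,
    fun h _ _ => alphaK_holds_of_frameCondition (h _) _⟩

end KripkeFrame

/-- Frame correspondence for the K-plane axiom `α_K(x,*)` of the system
`S_K(x,*)`: it is valid on a Kripke frame `(W, R)` iff every world `w` either
is irreflexive and sees at most `x` worlds, or is reflexive. Here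
`t = (fun _ => true)` is the all-true valuation, `img(V,w) = V '' {w' | R w w'}`,
and `x ≤ 2^v - 2`. -/
theorem alphaKstar_valid_iff_frame_condition (v : ℕ) (hv : 1 ≤ v) {W : Type*}
    (R : W → W → Prop) (x : ℕ) (hx : x ≤ 2 ^ v - 2) :
    (∀ (V : W → (Fin v → Bool)) (w : W), V w = (fun _ => true) →
      ((fun _ => true : Fin v → Bool) ∉ V '' {w' | R w w'} ∧
        (V '' {w' | R w w'}).ncard ≤ x) ∨
      (fun _ => true : Fin v → Bool) ∈ V '' {w' | R w w'}) ↔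
    (∀ w : W,
      (¬ R w w ∧ {w' | R w w'}.Finite ∧ {w' | R w w'}.ncard ≤ x) ∨ R w w) := by
  have h2 : 2 ≤ 2 ^ v := Nat.le_self_pow (by omega) 2
  have hcard : (x + 2 : ℕ∞) ≤ ENat.card (Fin v → Bool) := by
    rw [ENat.card_eq_coe_fintype_card, Fintype.card_fun, Fintype.card_bool, Fintype.card_fin]
    exact_mod_cast (by omega : x + 2 ≤ 2 ^ v)
  exact alphaK_valid_iff_frameCondition (add_one_le_encard_compl_singleton hcard _)
end

section
/- Fix v ≥ 1, let X := Fin v → Bool, n := 2^v, and let t ∈ X be the all-true valuation. Let (W, R) be a Kripke frame and let x, y : ℕ with x ≤ n - 1, y ≤ n - 1 and x ≤ y. Then the following are equivalent: (i) every world has an R-successor (seriality), and for every valuation assignment V : W → X and every world w with V w = t, either (t ∉ img(V,w) and img(V,w).ncard ≤ x) or (t ∈ img(V,w) and img(V,w).ncard ≤ y) — i.e., the D-plane axiom ◇⊤ ∧ α_K(x,y) is valid on the frame; (ii) every world w satisfies: (¬R w w, and sees(w) is finite with 1 ≤ sees(w).ncard and sees(w).ncard ≤ x) or (R w w, and others(w)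 is finite with others(w).ncard + 1 ≤ y). -/
/-- Auxiliary: inject a finite set into a finite target of at least the same size. -/
lemma exists_injOn_image_subset {W X : Type*} (S : Set W) (hS : S.Finite)
    (T : Set X) (hT : T.Finite) (h : S.ncard ≤ T.ncard) (x0 : X) :
    ∃ g : W → X, Set.InjOn g S ∧ g '' S ⊆ T := by
  classical
  haveI := hS.fintype
  haveI := hT.fintype
  have hcS : S.ncard = Fintype.card S := by
    rw [Set.ncard_eq_toFinset_card', Set.toFinset_card]
  have hcT : T.ncard = Fintype.card T := by
    rw [Set.ncard_eq_toFinset_card', Set.toFinset_card]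
  have h' : Fintype.card S ≤ Fintype.card T := by rw [← hcS, ← hcT]; exact h
  let eS := Fintype.equivFin S
  let eT := Fintype.equivFin T
  refine ⟨fun w => if hw : w ∈ S then (eT.symm (Fin.castLE h' (eS ⟨w, hw⟩)) : X) else x0,
    ?_, ?_⟩
  · intro a ha b hb hab
    simp only [dif_pos ha, dif_pos hb] at hab
    have := Subtype.val_injective hab
    have := eT.symm.injective this
    have := Fin.castLE_injective h' this
    have := eS.injective this
    simpa using congrArg Subtype.val this
  · rintro _ ⟨a, ha, rfl⟩
    simp only [dif_pos ha]
    exact (eT.symm _).2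

/-- Frame correspondence for the D-plane axiom `◇⊤ ∧ α_K(x,y)` of the system
`S_D(x, y-1)`: it is valid on a Kripke frame `(W, R)` iff every world `w`
either is irreflexive and sees at least 1 and at most `x` worlds, or is
reflexive and sees at most `y` worlds in total. Here `t = (fun _ => true)` is
the all-true valuation, `img(V,w) = V '' {w' | R w w'}`, and `x ≤ y ≤ 2^v - 1`. -/
theorem alphaD_valid_iff_frame_condition (v : ℕ) (hv : 1 ≤ v) {W : Type*}
    (R : W → W → Prop) (x y : ℕ)
    (hx : x ≤ 2 ^ v - 1) (hy : y ≤ 2 ^ v - 1) (hxy : x ≤ y) :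
    ((∀ w : W, ∃ w' : W, R w w') ∧
      ∀ (V : W → (Fin v → Bool)) (w : W), V w = (fun _ => true) →
        ((fun _ => true : Fin v → Bool) ∉ V '' {w' | R w w'} ∧
          (V '' {w' | R w w'}).ncard ≤ x) ∨
        ((fun _ => true : Fin v → Bool) ∈ V '' {w' | R w w'} ∧
          (V '' {w' | R w w'}).ncard ≤ y)) ↔
    (∀ w : W,
      (¬ R w w ∧ {w' | R w w'}.Finite ∧ 1 ≤ {w' | R w w'}.ncard ∧
        {w' | R w w'}.ncard ≤ x) ∨
      (R w w ∧ {w' | R w w' ∧ w' ≠ w}.Finite ∧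
        {w' | R w w' ∧ w' ≠ w}.ncard + 1 ≤ y)) := by
  classical
  set t : Fin v → Bool := fun _ => true with ht_def
  have hpow : 2 ≤ 2 ^ v := by
    calc 2 = 2 ^ 1 := (pow_one 2).symm
    _ ≤ 2 ^ v := Nat.pow_le_pow_right (by norm_num) hv
  have hcardX : Fintype.card (Fin v → Bool) = 2 ^ v := by
    simp [Fintype.card_fun]
  have hunivcard : (Set.univ : Set (Fin v → Bool)).ncard = 2 ^ v := by
    rw [Set.ncard_univ, Nat.card_eq_fintype_card, hcardX]
  have hcomplcard : ({a | a ≠ t} : Set (Fin v → Bool)).ncard = 2 ^ v - 1 := by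
    have h1 : ({a | a ≠ t} : Set (Fin v → Bool)) = Set.univ \ {t} := by ext a; simp
    rw [h1, Set.ncard_diff_singleton_of_mem (Set.mem_univ _), hunivcard]
  constructor
  · rintro ⟨hser, hval⟩ w
    by_cases hR : R w w
    · right
      refine ⟨hR, ?_⟩
      by_contra hcon
      set O := {w' | R w w' ∧ w' ≠ w} with hO_def
      have hS : ∃ S ⊆ O, S.Finite ∧ S.ncard = y := by
        by_cases hf : O.Finite
        · have hyO : y ≤ O.ncard := by
            by_contra hlt
            push_neg at hlt
            exact hcon ⟨hf, by omega⟩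
          obtain ⟨S, hSO, hScard⟩ := Set.exists_subset_card_eq hyO
          exact ⟨S, hSO, hf.subset hSO, hScard⟩
        · exact Set.Infinite.exists_subset_ncard_eq hf y
      obtain ⟨S, hSO, hSfin, hScard⟩ := hS
      obtain ⟨g, hg, hgT⟩ := exists_injOn_image_subset S hSfin
        ({a | a ≠ t} : Set (Fin v → Bool)) (Set.toFinite _)
        (by rw [hScard, hcomplcard]; exact hy) t
      set V : W → (Fin v → Bool) := fun w' => if w' ∈ S then g w' else t with hV_def
      have hwS : w ∉ S := fun hw => (hSO hw).2 rfl
      have hVw : V w = t := by simp [hV_def, hwS]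
      have himg : V '' {w' | R w w'} = insert t (g '' S) := by
        apply Set.Subset.antisymm
        · rintro _ ⟨w', hw', rfl⟩
          by_cases hw'S : w' ∈ S
          · exact Set.mem_insert_iff.mpr (Or.inr ⟨w', hw'S, by simp [hV_def, hw'S]⟩)
          · simp [hV_def, hw'S]
        · rintro a ha
          rcases Set.mem_insert_iff.mp ha with rfl | ⟨s, hs, rfl⟩
          · exact ⟨w, hR, hVw⟩
          · exact ⟨s, (hSO hs).1, by simp [hV_def, hs]⟩
      have htnot : t ∉ g '' S := fun h => (hgT h) rfl
      have hcard : (V '' {w' | R w w'}).ncard = y + 1 := by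
        rw [himg, Set.ncard_insert_of_notMem htnot (hSfin.image g),
          Set.ncard_image_of_injOn hg, hScard]
      rcases hval V w hVw with ⟨hnt, _⟩ | ⟨_, hle⟩
      · exact hnt (himg ▸ Set.mem_insert t _)
      · omega
    · left
      refine ⟨hR, ?_⟩
      have hmain : {w' | R w w'}.Finite ∧ {w' | R w w'}.ncard ≤ x := by
        by_contra hcon
        have hS : ∃ S ⊆ {w' | R w w'}, S.Finite ∧ S.ncard = x + 1 := by
          by_cases hf : {w' | R w w'}.Finite
          · have hxO : x + 1 ≤ {w' | R w w'}.ncard := by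
              by_contra hlt
              push_neg at hlt
              exact hcon ⟨hf, by omega⟩
            obtain ⟨S, hSO, hScard⟩ := Set.exists_subset_card_eq hxO
            exact ⟨S, hSO, hf.subset hSO, hScard⟩
          · exact Set.Infinite.exists_subset_ncard_eq hf (x + 1)
        obtain ⟨S, hSO, hSfin, hScard⟩ := hS
        have hSne : S.Nonempty :=
          Set.nonempty_of_ncard_ne_zero (by omega)
        obtain ⟨s0, hs0⟩ := hSne
        have hwsee : w ∉ {w' | R w w'} := hR
        by_cases hxe : x + 1 ≤ 2 ^ v - 1
        · -- inject avoiding t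
          obtain ⟨g, hg, hgT⟩ := exists_injOn_image_subset S hSfin
            ({a | a ≠ t} : Set (Fin v → Bool)) (Set.toFinite _)
            (by rw [hScard, hcomplcard]; exact hxe) t
          set V : W → (Fin v → Bool) :=
            fun w' => if w' = w then t else if w' ∈ S then g w' else g s0 with hV_def
          have hVw : V w = t := by simp [hV_def]
          have himg : V '' {w' | R w w'} = g '' S := by
            apply Set.Subset.antisymm
            · rintro _ ⟨w', hw', rfl⟩
              have hww : w' ≠ w := fun h => hwsee (h ▸ hw')
              by_cases hw'S : w' ∈ S
              · exact ⟨w', hw'S, by simp [hV_def, hww, hw'S]⟩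
              · exact ⟨s0, hs0, by simp [hV_def, hww, hw'S]⟩
            · rintro _ ⟨s, hs, rfl⟩
              have hsw : s ≠ w := fun h => hwsee (h ▸ hSO hs)
              exact ⟨s, hSO hs, by simp [hV_def, hsw, hs]⟩
          have htnot : t ∉ g '' S := fun h => (hgT h) rfl
          have hcard : (V '' {w' | R w w'}).ncard = x + 1 := by
            rw [himg, Set.ncard_image_of_injOn hg, hScard]
          rcases hval V w hVw with ⟨_, hle⟩ | ⟨hmem, _⟩
          · omega
          · exact htnot (himg ▸ hmem)
        · -- x = 2^v - 1, surject onto everything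
          have hxeq : x + 1 = 2 ^ v := by omega
          obtain ⟨g, hg, hgT⟩ := exists_injOn_image_subset S hSfin
            (Set.univ : Set (Fin v → Bool)) (Set.toFinite _)
            (by rw [hScard, hunivcard]; omega) t
          have hgS : g '' S = Set.univ := by
            exact Set.eq_of_subset_of_ncard_le hgT
              (by rw [hunivcard, Set.ncard_image_of_injOn hg, hScard]; omega)
              (Set.toFinite _)
          set V : W → (Fin v → Bool) :=
            fun w' => if w' = w then t else if w' ∈ S then g w' else g s0 with hV_def
          have hVw : V w = t := by simp [hV_def]
          have himg : V '' {w' | R w w'} = g '' S := by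
            apply Set.Subset.antisymm
            · rintro _ ⟨w', hw', rfl⟩
              have hww : w' ≠ w := fun h => hwsee (h ▸ hw')
              by_cases hw'S : w' ∈ S
              · exact ⟨w', hw'S, by simp [hV_def, hww, hw'S]⟩
              · exact ⟨s0, hs0, by simp [hV_def, hww, hw'S]⟩
            · rintro _ ⟨s, hs, rfl⟩
              have hsw : s ≠ w := fun h => hwsee (h ▸ hSO hs)
              exact ⟨s, hSO hs, by simp [hV_def, hsw, hs]⟩
          have hmem : t ∈ V '' {w' | R w w'} := by
            rw [himg, hgS]; exact Set.mem_univ t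
          have hcard : (V '' {w' | R w w'}).ncard = 2 ^ v := by
            rw [himg, hgS, hunivcard]
          rcases hval V w hVw with ⟨hnt, _⟩ | ⟨_, hle⟩
          · exact hnt hmem
          · omega
      obtain ⟨hfin, hle⟩ := hmain
      obtain ⟨w', hw'⟩ := hser w
      have hpos : 0 < {w' | R w w'}.ncard :=
        (Set.ncard_pos hfin).mpr ⟨w', hw'⟩
      exact ⟨hfin, hpos, hle⟩
  · intro hfr
    constructor
    · intro w
      rcases hfr w with ⟨_, hfin, h1, _⟩ | ⟨hR, _, _⟩
      · obtain ⟨w', hw'⟩ := Set.nonempty_of_ncard_ne_zero (s := {w' | R w w'}) (by omega)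
        exact ⟨w', hw'⟩
      · exact ⟨w, hR⟩
    · intro V w hVw
      rcases hfr w with ⟨hR, hfin, h1, hle⟩ | ⟨hR, hfin, hle⟩
      · have himg : (V '' {w' | R w w'}).ncard ≤ x :=
          le_trans (Set.ncard_image_le hfin) hle
        by_cases ht : t ∈ V '' {w' | R w w'}
        · exact Or.inr ⟨ht, himg.trans hxy⟩
        · exact Or.inl ⟨ht, himg⟩
      · right
        have hmem : t ∈ V '' {w' | R w w'} := ⟨w, hR, hVw⟩
        refine ⟨hmem, ?_⟩
        have hsees : {w' | R w w'} = insert w {w' | R w w' ∧ w' ≠ w} := by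
          ext w'
          by_cases h : w' = w <;> simp [h, hR]
        rw [hsees, Set.image_insert_eq, hVw]
        calc (insert t (V '' {w' | R w w' ∧ w' ≠ w})).ncard
            ≤ (V '' {w' | R w w' ∧ w' ≠ w}).ncard + 1 := Set.ncard_insert_le _ _
          _ ≤ {w' | R w w' ∧ w' ≠ w}.ncard + 1 := by
              exact Nat.add_le_add_right (Set.ncard_image_le hfin) 1
          _ ≤ y := hle
end

section
/- Fix v ≥ 1, let X := Fin v → Bool, n := 2^v, and let t ∈ X be the all-true valuation. Let (W, R) be a Kripke frame and let x : ℕ with x ≤ n - 2. Then the following are equivalent: (i) every world has an R-successor (seriality), and for every valuation assignment V : W → X and every world w with V w = t, either (t ∉ img(V,w) and img(V,w).ncard ≤ x) or t ∈ img(V,w) — i.e., the D-plane axiom ◇⊤ ∧ α_K(x,*) of the system S_D(x,*) is valid on the frame; (ii) every world w satisfies: (¬R w w, and sees(w) is finite with 1 ≤ sees(w).ncard and sees(w).ncard ≤ x) or R w w. -/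
/-!
A reflexive world `w` with `V w = t` has `t` in its own image, and at an irreflexive world
`img(V,w)` is no larger than `sees(w)`; so the frame condition implies the axiom. Conversely,
if an irreflexive `w` saw `x + 1` worlds, give `w` the value `t`, give those worlds pairwise
distinct values other than `t` (there are `2^v - 1 ≥ x + 1` of them) and all remaining worlds
some value other than `t`: then `t ∉ img(V,w)` although `img(V,w)` has more than `x` elements.
-/

open Set Function

theorem Set.encard_compl_singleton_add_one {X : Type*} [Finite X] (t : X) :
    ({t}ᶜ : Set X).encard + 1 = Nat.card X := by
  rw [compl_eq_univ_sdiff, encard_sdiff_singleton_add_one (mem_univ t), encard_univ,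
    ENat.card_eq_coe_natCard]

section

variable {W X : Type*} [Finite X] (t : X) (R : W → W → Prop)

theorem exists_injOn_and_eq_iff_of_encard_lt [Nontrivial X] {S : Set W} (hS : S.Finite)
    {w : W} (hwS : w ∉ S) (hcard : S.encard < Nat.card X) :
    ∃ V : W → X, (∀ w', V w' = t ↔ w' = w) ∧ InjOn V S := by
  classical
  obtain ⟨y, hy⟩ := exists_ne t
  have : Nonempty ({t}ᶜ : Set X) := ⟨⟨y, hy⟩⟩
  have hle : S.encard ≤ (univ : Set ({t}ᶜ : Set X)).encard := by
    rw [encard_univ, ENat.card_coe_set_eq, ← ENat.add_le_add_iff_right ENat.one_ne_top,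
      encard_compl_singleton_add_one]
    exact Order.add_one_le_of_lt hcard
  obtain ⟨g, -, hg⟩ := hS.exists_injOn_of_encard_le hle
  refine ⟨update (Subtype.val ∘ g) w t, fun w' => ?_, ?_⟩
  · rcases eq_or_ne w' w with rfl | hw'
    · simp
    · simpa [update_of_ne hw', hw'] using mem_compl_singleton_iff.1 (g w').2
  · exact (Subtype.val_injective.comp_injOn hg).congr fun a ha =>
      (update_of_ne (ne_of_mem_of_not_mem ha hwS) _ _).symm

theorem encard_le_of_forall_valuation {w : W} (hw : ¬ R w w) {x : ℕ} (hX : x + 2 ≤ Nat.card X)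
    (hax : ∀ V : W → X, V w = t → t ∉ V '' {w' | R w w'} → (V '' {w' | R w w'}).ncard ≤ x) :
    {w' | R w w'}.encard ≤ x := by
  by_contra! hlt
  obtain ⟨S, hSsub, hSenc⟩ := exists_subset_encard_eq (Order.add_one_le_of_lt hlt)
  have hSfin : S.Finite := finite_of_encard_eq_coe hSenc
  have hSncard : S.ncard = x + 1 := by
    exact_mod_cast hSfin.cast_ncard_eq.trans hSenc
  have : Nontrivial X := Finite.one_lt_card_iff_nontrivial.1 (by omega)
  obtain ⟨V, hVt, hinj⟩ := exists_injOn_and_eq_iff_of_encard_lt t hSfin (fun h => hw (hSsub h))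
    (by rw [hSenc]; exact_mod_cast (by omega : x + 1 < Nat.card X))
  have ht : t ∉ V '' {w' | R w w'} := by
    rintro ⟨w', hw', hV⟩
    exact hw ((hVt w').1 hV ▸ hw')
  have hle : (V '' S).ncard ≤ (V '' {w' | R w w'}).ncard :=
    ncard_le_ncard (image_mono hSsub) (toFinite _)
  rw [hinj.ncard_image, hSncard] at hle
  have := hax V ((hVt w).2 rfl) ht
  omega

theorem serial_and_alphaK_iff (w : W) {x : ℕ} (hX : x + 2 ≤ Nat.card X) :
    ((∃ w', R w w') ∧ ∀ V : W → X, V w = t →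
        (t ∉ V '' {w' | R w w'} ∧ (V '' {w' | R w w'}).ncard ≤ x) ∨ t ∈ V '' {w' | R w w'}) ↔
      (¬ R w w ∧ {w' | R w w'}.Finite ∧ 1 ≤ {w' | R w w'}.ncard ∧
        {w' | R w w'}.ncard ≤ x) ∨ R w w := by
  constructor
  · rintro ⟨⟨w', hw'⟩, hax⟩
    refine or_iff_not_imp_right.2 fun hw => ?_
    obtain ⟨hfin, hle⟩ := encard_le_coe_iff_finite_ncard_le.1 <|
      encard_le_of_forall_valuation t R hw hX fun V hVw ht => ((hax V hVw).resolve_right ht).2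
    exact ⟨hw, hfin, (ncard_pos hfin).2 ⟨w', hw'⟩, hle⟩
  · rintro (⟨-, hfin, hpos, hle⟩ | hw)
    · refine ⟨nonempty_of_ncard_ne_zero (s := {w' | R w w'}) (by omega), fun V _ => ?_⟩
      by_cases ht : t ∈ V '' {w' | R w w'}
      · exact Or.inr ht
      · exact Or.inl ⟨ht, (ncard_image_le hfin).trans hle⟩
    · exact ⟨⟨w, hw⟩, fun V hVw => Or.inr ⟨w, hw, hVw⟩⟩

end

/-- Frame correspondence for the D-plane axiom `◇⊤ ∧ α_K(x,*)` of the system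
`S_D(x,*)`: it is valid on a Kripke frame `(W, R)` iff every world `w` either
is irreflexive and sees at least 1 and at most `x` worlds, or is reflexive.
Here `t = (fun _ => true)` is the all-true valuation,
`img(V,w) = V '' {w' | R w w'}`, and `x ≤ 2^v - 2`. -/
theorem alphaDstar_valid_iff_frame_condition (v : ℕ) (hv : 1 ≤ v) {W : Type*}
    (R : W → W → Prop) (x : ℕ) (hx : x ≤ 2 ^ v - 2) :
    ((∀ w : W, ∃ w' : W, R w w') ∧
      ∀ (V : W → (Fin v → Bool)) (w : W), V w = (fun _ => true) →
        ((fun _ => true : Fin v → Bool) ∉ V '' {w' | R w w'} ∧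
          (V '' {w' | R w w'}).ncard ≤ x) ∨
        (fun _ => true : Fin v → Bool) ∈ V '' {w' | R w w'}) ↔
    (∀ w : W,
      (¬ R w w ∧ {w' | R w w'}.Finite ∧ 1 ≤ {w' | R w w'}.ncard ∧
        {w' | R w w'}.ncard ≤ x) ∨ R w w) := by
  have hX : x + 2 ≤ Nat.card (Fin v → Bool) := by
    have : 2 ≤ 2 ^ v := Nat.le_self_pow (by omega) 2
    simp only [Nat.card_eq_fintype_card, Fintype.card_fun, Fintype.card_bool, Fintype.card_fin]
    omega
  rw [forall_comm, ← forall_and]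
  exact forall_congr' fun w => serial_and_alphaK_iff _ R w hX
end
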